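/- arXiv:2507.16440 — 4 statements merged into one kernel-verified Lean document; each statement's English description precedes it below -/
import Mathlib

section
/- Let X be an n × M real matrix with XᵀX invertible, and define the OLS coefficient map β̂(y) = (XᵀX)⁻¹ Xᵀ y for y : Fin n → ℝ. Let K ≥ 2, r : Fin n → Fin K, l̃ : Fin K → ℝ, r̃ i = l̃ (r i), and d_k i = 1 if r i ≤ k else 0. Then β̂(r̃) = (∑_{k=0}^{K−2} (l̃ k − l̃ (k+1)) · β̂(d_k)) + l̃ (K−1) · (XᵀX)⁻¹ Xᵀ 𝟙, where 𝟙 is the all-ones vector in ℝⁿ. -/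
/-!
By telescoping, `l̃ j = l̃ (K-1) + ∑_{k ≥ j} (l̃ k - l̃ (k+1))`, so the transformed outcome is the
linear combination `r̃ = ∑_k (l̃ k - l̃ (k+1)) • d_k + l̃ (K-1) • 𝟙`, and `β̂` is linear in the outcome.
-/

open Matrix Finset

/-- The OLS coefficient map `β̂(y) = (XᵀX)⁻¹ Xᵀ y`. -/
noncomputable def olsCoef {n M : ℕ} (X : Matrix (Fin n) (Fin M) ℝ) (y : Fin n → ℝ) :
    Fin M → ℝ :=
  (Xᵀ * X)⁻¹ *ᵥ (Xᵀ *ᵥ y)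

theorem olsCoef_eq_mulVec {n M : ℕ} (X : Matrix (Fin n) (Fin M) ℝ) (y : Fin n → ℝ) :
    olsCoef X y = ((Xᵀ * X)⁻¹ * Xᵀ) *ᵥ y := by
  rw [olsCoef, mulVec_mulVec]

theorem Finset.sum_range_ite_le_sub_succ {G : Type*} [AddCommGroup G] (f : ℕ → G) {j m : ℕ}
    (hjm : j ≤ m) :
    ∑ k ∈ range m, (if j ≤ k then f k - f (k + 1) else 0) = f j - f m := by
  have hfilter : (range m).filter (j ≤ ·) = Ico j m := by
    ext k
    simp [and_comm]
  rw [← sum_filter, hfilter, ← neg_sub (f m), ← sum_Ico_sub f hjm, ← sum_neg_distrib]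
  simp only [neg_sub]

theorem sum_label_gap_mul_indicator {K : ℕ} (hK : 1 ≤ K) (l : Fin K → ℝ) (j : Fin K) :
    ∑ k : Fin (K - 1),
        (l (Fin.castLE (Nat.sub_le K 1) k) - l (Fin.cast (Nat.sub_add_cancel hK) k.succ)) *
          (if (j : ℕ) ≤ (k : ℕ) then (1 : ℝ) else 0) =
      l j - l ⟨K - 1, by omega⟩ := by
  set f : ℕ → ℝ := fun k => if h : k < K then l ⟨k, h⟩ else 0 with hf
  have hgap (k : Fin (K - 1)) :
      (l (Fin.castLE (Nat.sub_le K 1) k) - l (Fin.cast (Nat.sub_add_cancel hK) k.succ)) *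
          (if (j : ℕ) ≤ (k : ℕ) then (1 : ℝ) else 0) =
        if (j : ℕ) ≤ (k : ℕ) then f k - f (k + 1) else 0 := by
    have hk : (k : ℕ) + 1 < K := by omega
    simp only [hf, dif_pos hk, dif_pos (Nat.lt_of_succ_lt hk), mul_ite, mul_one, mul_zero]
    rfl
  rw [sum_congr rfl fun k _ => hgap k,
    Fin.sum_univ_eq_sum_range (fun k => if (j : ℕ) ≤ k then f k - f (k + 1) else 0),
    sum_range_ite_le_sub_succ f (by omega)]
  simp only [hf, dif_pos j.isLt, dif_pos (show K - 1 < K by omega)]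

/-- Decomposition of the OLS coefficient vector of the transformed
outcome `r̃ i = l̃ (r i)` into a weighted sum of the OLS coefficient vectors of the
dichotomizations, plus the top label times the OLS coefficient of the all-ones vector. -/
theorem stmt_1 (n M K : ℕ) (hK : 2 ≤ K)
    (X : Matrix (Fin n) (Fin M) ℝ)
    (r : Fin n → Fin K) (l : Fin K → ℝ) :
    olsCoef X (fun i => l (r i)) =
      (∑ k : Fin (K - 1),
        (l (Fin.castLE (by omega) k) - l (Fin.cast (by omega) k.succ)) •
          olsCoef X (fun i => if (r i : ℕ) ≤ (k : ℕ) then (1 : ℝ) else 0)) +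
      l ⟨K - 1, by omega⟩ • ((Xᵀ * X)⁻¹ *ᵥ (Xᵀ *ᵥ fun _ => (1 : ℝ))) := by
  have hdecomp : (fun i => l (r i)) =
      (∑ k : Fin (K - 1),
        (l (Fin.castLE (by omega) k) - l (Fin.cast (by omega) k.succ)) •
          (fun i => if (r i : ℕ) ≤ (k : ℕ) then (1 : ℝ) else 0)) +
      l ⟨K - 1, by omega⟩ • (fun _ => (1 : ℝ)) := by
    funext i
    simp only [Finset.sum_apply, Pi.add_apply, Pi.smul_apply, smul_eq_mul,
      sum_label_gap_mul_indicator (by omega) l (r i)]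
    ring
  rw [hdecomp]
  simp only [olsCoef_eq_mulVec, mulVec_add, mulVec_sum, mulVec_smul, mulVec_mulVec]
end

section
/- Let X be an n × M real matrix with XᵀX invertible whose 0-th column is the all-ones vector, let β̂(y) = (XᵀX)⁻¹ Xᵀ y, let K ≥ 2, r : Fin n → Fin K, and d_k i = 1 if r i ≤ k else 0. Fix a coefficient index m ≠ 0 and suppose there exist thresholds k and k′ with β̂(d_k)_m > 0 and β̂(d_{k′})_m < 0. Then there exist strictly increasing labellings l̃⁺ and l̃⁻ : Fin K → ℝ such that the coefficient on the transformed outcome is positive under l̃⁺ and negative under l̃⁻, i.e. β̂(fun i => l̃⁺ (r i))_m > 0 and β̂(fun i => l̃⁻ (r i))_m < 0. -/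
/-! Write `d_k` for the dichotomized outcome at threshold `k` and `r` for the raw ranks.
The labelling `j ↦ ε j - [j ≤ k]` is strictly increasing for every `ε > 0`, and by linearity of
`β̂` its coefficient is `ε β̂(r)_m - β̂(d_k)_m`, which for small `ε` has the sign opposite to
`β̂(d_k)_m`. Thus the threshold `k′` yields `l̃⁺` and the threshold `k` yields `l̃⁻`. -/

open Matrix Filter Topology

section olsCoef

variable {n M : ℕ} (X : Matrix (Fin n) (Fin M) ℝ)

lemma olsCoef_sub (y z : Fin n → ℝ) : olsCoef X (y - z) = olsCoef X y - olsCoef X z := by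
  simp only [olsCoef, mulVec_sub]

lemma olsCoef_smul (c : ℝ) (y : Fin n → ℝ) : olsCoef X (c • y) = c • olsCoef X y := by
  simp only [olsCoef, mulVec_smul]

end olsCoef

def tiltedThreshold (k : ℕ) (ε : ℝ) (j : ℕ) : ℝ :=
  ε * j - if j ≤ k then 1 else 0

lemma strictMono_tiltedThreshold (k : ℕ) {ε : ℝ} (hε : 0 < ε) :
    StrictMono (tiltedThreshold k ε) := by
  have hstep : Antitone fun j : ℕ => if j ≤ k then (1 : ℝ) else 0 := by
    intro i j hij
    dsimp only
    split_ifs <;> first | omega | norm_num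
  exact (Nat.strictMono_cast.const_mul hε).add_monotone hstep.neg

lemma exists_pos_add_mul_mem {U : Set ℝ} (hU : IsOpen U) {a : ℝ} (ha : a ∈ U) (c : ℝ) :
    ∃ ε > 0, a + ε * c ∈ U := by
  have hlim : Tendsto (fun ε : ℝ => a + ε * c) (𝓝[>] 0) (𝓝 a) := by
    have : Continuous fun ε : ℝ => a + ε * c := by fun_prop
    simpa using (this.tendsto 0).mono_left nhdsWithin_le_nhds
  exact ((hlim.eventually (hU.mem_nhds ha)).and self_mem_nhdsWithin).exists.imp
    fun ε hε => ⟨hε.2, hε.1⟩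

lemma exists_strictMono_olsCoef_mem {n M K : ℕ} (X : Matrix (Fin n) (Fin M) ℝ)
    (r : Fin n → Fin K) (m : Fin M) (k : ℕ) {U : Set ℝ} (hU : IsOpen U)
    (hk : -olsCoef X (fun i => if (r i : ℕ) ≤ k then (1 : ℝ) else 0) m ∈ U) :
    ∃ l : Fin K → ℝ, StrictMono l ∧ olsCoef X (fun i => l (r i)) m ∈ U := by
  obtain ⟨ε, hε, hU⟩ := exists_pos_add_mul_mem hU hk (olsCoef X (fun i => (r i : ℝ)) m)
  refine ⟨tiltedThreshold k ε ∘ Fin.val,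
    (strictMono_tiltedThreshold k hε).comp Fin.val_strictMono, ?_⟩
  have hy : (fun i => tiltedThreshold k ε (r i)) =
      ε • (fun i => (r i : ℝ)) - fun i => if (r i : ℕ) ≤ k then (1 : ℝ) else 0 := rfl
  simpa only [Function.comp_apply, hy, olsCoef_sub, olsCoef_smul, Pi.sub_apply, Pi.smul_apply,
    smul_eq_mul, neg_add_eq_sub] using hU

theorem stmt_4_general (n M K : ℕ)
    (X : Matrix (Fin n) (Fin M) ℝ)
    (r : Fin n → Fin K) (m : Fin M)
    (k k' : Fin (K - 1))
    (hpos : 0 < olsCoef X (fun i => if (r i : ℕ) ≤ (k : ℕ) then (1 : ℝ) else 0) m)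
    (hneg : olsCoef X (fun i => if (r i : ℕ) ≤ (k' : ℕ) then (1 : ℝ) else 0) m < 0) :
    ∃ lplus lminus : Fin K → ℝ, StrictMono lplus ∧ StrictMono lminus ∧
      0 < olsCoef X (fun i => lplus (r i)) m ∧
      olsCoef X (fun i => lminus (r i)) m < 0 := by
  obtain ⟨lplus, hplus_mono, hplus⟩ :=
    exists_strictMono_olsCoef_mem X r m k' isOpen_Ioi (Set.mem_Ioi.2 (neg_pos.2 hneg))
  obtain ⟨lminus, hminus_mono, hminus⟩ :=
    exists_strictMono_olsCoef_mem X r m k isOpen_Iio (Set.mem_Iio.2 (neg_neg_of_pos hpos))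
  exact ⟨lplus, lminus, hplus_mono, hminus_mono, hplus, hminus⟩

/-- reversibility direction of Proposition 1. If the dichotomized
coefficients take both signs, then there exist strictly increasing labellings making
the coefficient on the transformed outcome positive, respectively negative. -/
theorem stmt_4 (n M K : ℕ) [NeZero M] (hK : 2 ≤ K)
    (X : Matrix (Fin n) (Fin M) ℝ) (hX : IsUnit (Xᵀ * X))
    (hcol : X *ᵥ Pi.single (0 : Fin M) 1 = fun _ => (1 : ℝ))
    (r : Fin n → Fin K) (m : Fin M) (hm : m ≠ 0)
    (k k' : Fin (K - 1))
    (hpos : 0 < olsCoef X (fun i => if (r i : ℕ) ≤ (k : ℕ) then (1 : ℝ) else 0) m)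
    (hneg : olsCoef X (fun i => if (r i : ℕ) ≤ (k' : ℕ) then (1 : ℝ) else 0) m < 0) :
    ∃ lplus lminus : Fin K → ℝ, StrictMono lplus ∧ StrictMono lminus ∧
      0 < olsCoef X (fun i => lplus (r i)) m ∧
      olsCoef X (fun i => lminus (r i)) m < 0 :=
  stmt_4_general n M K X r m k k' hpos hneg
end

section
/- Let K ≥ 3 and L > 0, and let d : Fin (K−1) → ℝ be the vector with d 0 = L and d k = 0 for all k ≠ 0. Then d satisfies d k ≥ 0 for every k and ∑_k d k = L, and its variance attains the maximal value: (1/(K−1)) · ∑_k (d k − L/(K−1))² = ((K−2)/(K−1)²) · L². Consequently, the maximum of the variance over all nonnegative vectors in Fin (K−1) → ℝ summing to L equals ((K−2)/(K−1)²) · L². -/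
/-!
Writing `n` for the number of differences and `L` for their sum, the variance about the mean
`L / n` is `(∑ e k ^ 2 - L ^ 2 / n) / n`, so maximizing it means maximizing `∑ e k ^ 2`. For
nonnegative entries `∑ e k ^ 2 ≤ (∑ e k) ^ 2 = L ^ 2`, with equality for a single jump, which
gives the maximum `(L ^ 2 - L ^ 2 / n) / n = (n - 1) / n ^ 2 * L ^ 2`.
-/

open Finset

noncomputable section

variable {ι : Type*} [Fintype ι]

def scaleVariance (L : ℝ) (e : ι → ℝ) : ℝ :=
  1 / (Fintype.card ι : ℝ) * ∑ k, (e k - L / Fintype.card ι) ^ 2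

lemma sum_sq_sub_div_card {L : ℝ} {e : ι → ℝ} (he : ∑ k, e k = L) :
    ∑ k, (e k - L / Fintype.card ι) ^ 2 = ∑ k, e k ^ 2 - L ^ 2 / Fintype.card ι := by
  set n : ℝ := (Fintype.card ι : ℝ)
  have expand : ∀ k, (e k - L / n) ^ 2 = e k ^ 2 - 2 * (L / n) * e k + (L / n) ^ 2 :=
    fun k ↦ by ring
  simp only [expand, sum_add_distrib, sum_sub_distrib, ← mul_sum, sum_const, card_univ,
    nsmul_eq_mul, he]
  rcases eq_or_ne n 0 with hn | hn
  · simp [hn]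
  · field_simp
    ring

lemma scaleVariance_eq {L : ℝ} {e : ι → ℝ} (he : ∑ k, e k = L) :
    scaleVariance L e = 1 / (Fintype.card ι : ℝ) * (∑ k, e k ^ 2 - L ^ 2 / Fintype.card ι) := by
  rw [scaleVariance, sum_sq_sub_div_card he]

lemma one_div_mul_sq_sub_sq_div {n : ℝ} (hn : n ≠ 0) (L : ℝ) :
    1 / n * (L ^ 2 - L ^ 2 / n) = (n - 1) / n ^ 2 * L ^ 2 := by
  field_simp

lemma scaleVariance_pi_single [DecidableEq ι] (i : ι) (L : ℝ) :
    scaleVariance L (Pi.single i L) =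
      ((Fintype.card ι : ℝ) - 1) / (Fintype.card ι : ℝ) ^ 2 * L ^ 2 := by
  have hn : (Fintype.card ι : ℝ) ≠ 0 := Nat.cast_ne_zero.2 (Fintype.card_pos_iff.2 ⟨i⟩).ne'
  have hsq : ∑ k, (Pi.single i L : ι → ℝ) k ^ 2 = L ^ 2 := by
    simp [sq, Pi.single_apply]
  rw [scaleVariance_eq (by simp), hsq,
    one_div_mul_sq_sub_sq_div hn]

lemma scaleVariance_le {L : ℝ} {e : ι → ℝ} (he0 : ∀ k, 0 ≤ e k) (he : ∑ k, e k = L) :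
    scaleVariance L e ≤ ((Fintype.card ι : ℝ) - 1) / (Fintype.card ι : ℝ) ^ 2 * L ^ 2 := by
  rcases isEmpty_or_nonempty ι with _ | _
  · simp [scaleVariance]
  have hn : (Fintype.card ι : ℝ) ≠ 0 := Nat.cast_ne_zero.2 Fintype.card_ne_zero
  have hsq : ∑ k, e k ^ 2 ≤ L ^ 2 := he ▸ sum_sq_le_sq_sum_of_nonneg fun k _ ↦ he0 k
  rw [scaleVariance_eq he, ← one_div_mul_sq_sub_sq_div hn]
  gcongr

lemma isGreatest_scaleVariance [Nonempty ι] {L : ℝ} (hL : 0 ≤ L) :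
    IsGreatest {v | ∃ e : ι → ℝ, (∀ k, 0 ≤ e k) ∧ ∑ k, e k = L ∧ v = scaleVariance L e}
      (((Fintype.card ι : ℝ) - 1) / (Fintype.card ι : ℝ) ^ 2 * L ^ 2) := by
  classical
  obtain ⟨i⟩ := ‹Nonempty ι›
  have hsingle_nonneg k : 0 ≤ (Pi.single i L : ι → ℝ) k :=
    (Pi.single_nonneg.2 hL : (0 : ι → ℝ) ≤ Pi.single i L) k
  refine ⟨⟨Pi.single i L, hsingle_nonneg, by simp, (scaleVariance_pi_single i L).symm⟩, ?_⟩
  rintro v ⟨e, he0, he, rfl⟩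
  exact scaleVariance_le he0 he

end

/-- the single-jump configuration attains the maximal variance.
For `K ≥ 3` and `L > 0`, the vector with `d 0 = L` and all other entries `0` is
nonnegative, sums to `L`, and attains variance `((K−2)/(K−1)²) L²`; consequently
this value is the maximum of the variance over all nonnegative vectors summing
to `L`. -/
theorem stmt_13 (K : ℕ) (hK : 3 ≤ K) (L : ℝ) (hL : 0 < L)
    (d : Fin (K - 1) → ℝ) (hdef : d = fun k : Fin (K - 1) => if (k : ℕ) = 0 then L else 0) :
    (∀ k, 0 ≤ d k) ∧ (∑ k, d k = L) ∧
    ((1 / ((K : ℝ) - 1)) * ∑ k, (d k - L / ((K : ℝ) - 1)) ^ 2 =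
      (((K : ℝ) - 2) / ((K : ℝ) - 1) ^ 2) * L ^ 2) ∧
    IsGreatest
      {v : ℝ | ∃ e : Fin (K - 1) → ℝ, (∀ k, 0 ≤ e k) ∧ (∑ k, e k = L) ∧
        v = (1 / ((K : ℝ) - 1)) * ∑ k, (e k - L / ((K : ℝ) - 1)) ^ 2}
      ((((K : ℝ) - 2) / ((K : ℝ) - 1) ^ 2) * L ^ 2) := by
  have hcard : (K : ℝ) - 1 = Fintype.card (Fin (K - 1)) := by
    rw [Fintype.card_fin, Nat.cast_sub (by omega), Nat.cast_one]
  have hK2 : (K : ℝ) - 2 = Fintype.card (Fin (K - 1)) - 1 := by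
    rw [← hcard]
    ring
  have hd : d = Pi.single ⟨0, by omega⟩ L := by
    subst hdef
    ext k
    simp [Pi.single_apply, Fin.ext_iff]
  subst hd
  have : Nonempty (Fin (K - 1)) := ⟨⟨0, by omega⟩⟩
  have hsingle_nonneg k : 0 ≤ (Pi.single ⟨0, by omega⟩ L : Fin (K - 1) → ℝ) k :=
    (Pi.single_nonneg.2 hL.le : (0 : Fin (K - 1) → ℝ) ≤ Pi.single _ L) k
  rw [hK2, hcard]
  exact ⟨hsingle_nonneg, by simp, scaleVariance_pi_single _ L, isGreatest_scaleVariance hL.le⟩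
end

section
/- Let a < b be real numbers and let g : ℝ → ℝ be continuous on [a, b]. Suppose there exist t₀, t₁ ∈ [a, b] with g(t₀) > 0 and g(t₁) < 0. Then there exist functions f₊ and f₋ : ℝ → ℝ, each continuously differentiable on [a, b] with strictly positive derivative on [a, b], such that ∫_a^b f₊′(t) · g(t) dt > 0 and ∫_a^b f₋′(t) · g(t) dt < 0. -/
/-!
Take the weight `f' = ε + g⁺`, where `g` is first extended continuously from `[a, b]` to `ℝ`.
Then `∫_a^b f' g = ε ∫_a^b g + ∫_a^b (g⁺)²`, and the last integral is positive because
`g(t₀) > 0`, so a small enough `ε > 0` makes the whole integral positive while keeping `f' > 0`.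
Replacing `g` by `-g` gives the weight with negative integral.
-/

open intervalIntegral Set Filter Topology
open MeasureTheory (volume)

lemma exists_continuous_nonneg_integral_mul_pos {a b : ℝ} (hab : a < b) {g : ℝ → ℝ}
    (hg : ContinuousOn g (Icc a b)) {t₀ : ℝ} (ht₀ : t₀ ∈ Icc a b) (hpos : 0 < g t₀) :
    ∃ φ : ℝ → ℝ, Continuous φ ∧ (∀ t, 0 ≤ φ t) ∧ 0 < ∫ t in a..b, φ t * g t := by
  set G := IccExtend hab.le ((Icc a b).domRestrict g)
  have hG : Continuous G := continuous_IccExtend_iff.mpr hg.domRestrict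
  have hGg : ∀ t ∈ Icc a b, G t = g t := fun t ht => IccExtend_of_mem _ _ ht
  refine ⟨fun t => max 0 (G t), continuous_const.max hG, fun t => le_max_left _ _, ?_⟩
  refine integral_pos hab ((continuous_const.max hG).continuousOn.mul hg) ?_
    ⟨t₀, ht₀, by simp only [hGg t₀ ht₀, max_eq_right hpos.le, mul_self_pos.mpr hpos.ne']⟩
  intro t ht
  show 0 ≤ max 0 (G t) * g t
  rw [hGg t (Ioc_subset_Icc_self ht)]
  rcases le_total 0 (g t) with h | h
  · simp only [max_eq_right h, mul_self_nonneg]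
  · simp only [max_eq_left h, zero_mul, le_refl]

lemma exists_pos_integral_add_mul_pos {a b : ℝ} {g φ : ℝ → ℝ}
    (hg : IntervalIntegrable g volume a b)
    (hφg : IntervalIntegrable (fun t => φ t * g t) volume a b)
    (hpos : 0 < ∫ t in a..b, φ t * g t) :
    ∃ ε > 0, 0 < ∫ t in a..b, (ε + φ t) * g t := by
  set J := ∫ t in a..b, g t
  set I := ∫ t in a..b, φ t * g t
  have hlin : ∀ ε, ∫ t in a..b, (ε + φ t) * g t = ε * J + I := fun ε => by
    simp only [add_mul]
    rw [integral_add (hg.const_mul ε) hφg, integral_const_mul]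
  have hnear : ∀ᶠ ε in 𝓝[>] (0 : ℝ), 0 < ε * J + I := by
    refine nhdsWithin_le_nhds (Tendsto.eventually_const_lt hpos ?_)
    exact (show Continuous fun ε : ℝ => ε * J + I by fun_prop).tendsto' 0 I (by simp)
  obtain ⟨ε, hεI, hε⟩ := (hnear.and self_mem_nhdsWithin).exists
  exact ⟨ε, hε, by rwa [hlin]⟩

lemma exists_hasDerivAt_pos_integral_mul_pos {a b : ℝ} (hab : a < b) {g : ℝ → ℝ}
    (hg : ContinuousOn g (Icc a b)) {t₀ : ℝ} (ht₀ : t₀ ∈ Icc a b) (hpos : 0 < g t₀) :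
    ∃ f f' : ℝ → ℝ, (∀ t, HasDerivAt f (f' t) t) ∧ Continuous f' ∧ (∀ t, 0 < f' t) ∧
      0 < ∫ t in a..b, f' t * g t := by
  obtain ⟨φ, hφ, hφ0, hφg⟩ := exists_continuous_nonneg_integral_mul_pos hab hg ht₀ hpos
  have hgi : IntervalIntegrable g volume a b :=
    (hg.mono (uIcc_of_le hab.le).subset).intervalIntegrable
  have hφgi : IntervalIntegrable (fun t => φ t * g t) volume a b :=
    hgi.continuousOn_mul hφ.continuousOn
  obtain ⟨ε, hε, hεg⟩ := exists_pos_integral_add_mul_pos hgi hφgi hφg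
  have hw : Continuous fun t => ε + φ t := continuous_const.add hφ
  exact ⟨fun x => ∫ t in (0 : ℝ)..x, ε + φ t, fun t => ε + φ t,
    fun t => (hw.integral_hasStrictDerivAt 0 t).hasDerivAt, hw,
    fun t => add_pos_of_pos_of_nonneg hε (hφ0 t), hεg⟩

/-- converse direction of Proposition A1, continuous outcomes.
If the continuous function `g` takes both strict signs on `[a, b]`, then there are
continuously differentiable transformations with strictly positive derivative on
`[a, b]` making the weighted integral `∫_a^b f'(t) g(t) dt` positive, respectively
negative. -/
theorem stmt_16 (a b : ℝ) (hab : a < b) (g : ℝ → ℝ)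
    (hg : ContinuousOn g (Set.Icc a b))
    (t₀ t₁ : ℝ) (ht₀ : t₀ ∈ Set.Icc a b) (ht₁ : t₁ ∈ Set.Icc a b)
    (hpos : 0 < g t₀) (hneg : g t₁ < 0) :
    ∃ fplus fplus' fminus fminus' : ℝ → ℝ,
      (∀ t ∈ Set.Icc a b, HasDerivAt fplus (fplus' t) t) ∧
      ContinuousOn fplus' (Set.Icc a b) ∧
      (∀ t ∈ Set.Icc a b, 0 < fplus' t) ∧
      (∀ t ∈ Set.Icc a b, HasDerivAt fminus (fminus' t) t) ∧
      ContinuousOn fminus' (Set.Icc a b) ∧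
      (∀ t ∈ Set.Icc a b, 0 < fminus' t) ∧
      (0 < ∫ t in a..b, fplus' t * g t) ∧
      (∫ t in a..b, fminus' t * g t) < 0 := by
  obtain ⟨fp, fp', hfp, hfp'c, hfp'pos, hplus⟩ :=
    exists_hasDerivAt_pos_integral_mul_pos hab hg ht₀ hpos
  obtain ⟨fm, fm', hfm, hfm'c, hfm'pos, hminus⟩ :=
    exists_hasDerivAt_pos_integral_mul_pos hab hg.neg ht₁ (neg_pos.mpr hneg)
  simp only [Pi.neg_apply, mul_neg, integral_neg, neg_pos] at hminus
  exact ⟨fp, fp', fm, fm', fun t _ => hfp t, hfp'c.continuousOn, fun t _ => hfp'pos t,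
    fun t _ => hfm t, hfm'c.continuousOn, fun t _ => hfm'pos t, hplus, hminus⟩
end
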